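/- arXiv:2310.09545 — 2 statements merged into one kernel-verified Lean document; each statement's English description precedes it below -/
import Mathlib

section
/- Suppose π*(t,z,x) = Pr(T=t, Z=z | X=x) (correct propensity) but the outcome/treatment regression models μ̃_A, μ̃_Y, δ̃_A, δ̃_Y are arbitrary functions with δ̃_A ≠ 0. If additionally δ̃_Y(x)/δ̃_A(x) = δ_Y(x)/δ_A(x) (correct CATE ratio), then E[Δ̃(O) | X] = δ_Y(X)/δ_A(X), where Δ̃ is the efficient influence function with the working models plugged in: Δ̃(O) = δ̃_Y(X)/δ̃_A(X) + (2Z−1)(2T−1)/(π*(T,Z,X)δ̃_A(X))·{Y − μ̃_Y(T,Z,X) − (δ̃_Y(X)/δ̃_A(X))(A − μ̃_A(T,Z,X))}. -/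
open MeasureTheory ProbabilityTheory

/-- `{0,1}`-coding of a Boolean. -/
noncomputable def bi (b : Bool) : ℝ := if b then 1 else 0

/-- Sign coding `2b − 1` of a Boolean. -/
noncomputable def sg (b : Bool) : ℝ := if b then 1 else -1

/-- Conditional-cell probability `π*(t,z,x) = Pr(T=t, Z=z | X=x)` (with `X = x` implicit in
the measure `μ`, the conditional law of the data given `X = x`). -/
noncomputable def cellP {Ω : Type*} [MeasurableSpace Ω] (μ : Measure Ω)
    (T Z : Ω → Bool) (t z : Bool) : ℝ := (μ {ω | T ω = t ∧ Z ω = z}).toReal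

/-- Conditional-cell mean `μ_C(t,z,x) = E[C | T=t, Z=z, X=x]`. -/
noncomputable def cellE {Ω : Type*} [MeasurableSpace Ω] (μ : Measure Ω)
    (T Z : Ω → Bool) (C : Ω → ℝ) (t z : Bool) : ℝ :=
  ∫ ω, C ω ∂(μ[|{ω | T ω = t ∧ Z ω = z}])

/-- Double difference of a cell function. -/
noncomputable def dd (m : Bool → Bool → ℝ) : ℝ :=
  m true true - m false true - m true false + m false false

/-!
With the true propensity, inverse weighting turns `E[(2Z−1)(2T−1) g(T,Z,·)/π*(T,Z)]` into the
double difference of the cell means of `g`. Hence for every constant `r` the expectation of the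
plugged-in influence function is `r + {δ_Y − δ̃_Y − r (δ_A − δ̃_A)}/δ̃_A`, whatever the working
models are. For `r = δ̃_Y/δ̃_A = δ_Y/δ_A` both `δ_Y − r δ_A` and `δ̃_Y − r δ̃_A` vanish.
-/

section FiniteValued

lemma apply_eq_sum_indicator_preimage_singleton {Ω ι M : Type*} [AddCommMonoid M] [Fintype ι]
    (K : Ω → ι) (F : ι → Ω → M) (ω : Ω) :
    F (K ω) ω = ∑ i, (K ⁻¹' {i}).indicator (F i) ω := by
  classical
  simp [Set.indicator_apply, eq_comm (a := K ω)]

variable {Ω ι E : Type*} [MeasurableSpace Ω] {μ : Measure Ω} [NormedAddCommGroup E] [Fintype ι]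
  [MeasurableSpace ι] [MeasurableSingletonClass ι] {K : Ω → ι} {F : ι → Ω → E}

lemma integrable_apply_comp (hK : Measurable K) (hF : ∀ i, Integrable (F i) μ) :
    Integrable (fun ω => F (K ω) ω) μ :=
  (integrable_finsetSum _ fun i _ => (hF i).indicator (hK (measurableSet_singleton i))).congr
    (ae_of_all _ fun ω => (apply_eq_sum_indicator_preimage_singleton K F ω).symm)

lemma integral_apply_comp_eq_sum [NormedSpace ℝ E] (hK : Measurable K)
    (hF : ∀ i, Integrable (F i) μ) :
    ∫ ω, F (K ω) ω ∂μ = ∑ i, ∫ ω in K ⁻¹' {i}, F i ω ∂μ := by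
  have hmeas : ∀ i, MeasurableSet (K ⁻¹' {i}) := fun i => hK (measurableSet_singleton i)
  simp_rw [apply_eq_sum_indicator_preimage_singleton K F,
    integral_finsetSum _ fun i _ => (hF i).indicator (hmeas i), integral_indicator (hmeas _)]

end FiniteValued

section Conditioning

variable {Ω E : Type*} [MeasurableSpace Ω] {μ : Measure Ω} [NormedAddCommGroup E]

lemma MeasureTheory.Integrable.cond {f : Ω → E} (hf : Integrable f μ) {s : Set Ω}
    (hs : μ s ≠ 0) : Integrable f μ[|s] :=
  hf.restrict.smul_measure (ENNReal.inv_ne_top.2 hs)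

lemma setIntegral_eq_measureReal_smul_integral_cond [NormedSpace ℝ E] [IsFiniteMeasure μ]
    (s : Set Ω) (f : Ω → E) : ∫ ω in s, f ω ∂μ = μ.real s • ∫ ω, f ω ∂μ[|s] := by
  by_cases hs : μ s = 0
  · simp [Measure.restrict_eq_zero.2 hs, Measure.real, hs]
  · rw [ProbabilityTheory.cond, integral_smul_measure, smul_smul, ENNReal.toReal_inv,
      Measure.real, mul_inv_cancel₀ (ENNReal.toReal_ne_zero.2 ⟨hs, measure_ne_top μ s⟩), one_smul]

end Conditioning

section Cells

variable {Ω : Type*} [MeasurableSpace Ω] {μ : Measure Ω} {T Z : Ω → Bool}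

lemma integrable_apply_comp_cell (hT : Measurable T) (hZ : Measurable Z)
    {F : Bool → Bool → Ω → ℝ} (hF : ∀ t z, Integrable (F t z) μ) :
    Integrable (fun ω => F (T ω) (Z ω) ω) μ :=
  integrable_apply_comp (F := fun p : Bool × Bool => F p.1 p.2) (hT.prodMk hZ)
    fun p => hF p.1 p.2

lemma integral_apply_comp_cell_eq_sum (hT : Measurable T) (hZ : Measurable Z)
    {F : Bool → Bool → Ω → ℝ} (hF : ∀ t z, Integrable (F t z) μ) :
    ∫ ω, F (T ω) (Z ω) ω ∂μ = ∑ t, ∑ z, ∫ ω in {ω | T ω = t ∧ Z ω = z}, F t z ω ∂μ := by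
  have hcell : ∀ t z, (fun ω => (T ω, Z ω)) ⁻¹' {(t, z)} = {ω | T ω = t ∧ Z ω = z} :=
    fun t z => by ext; simp
  rw [integral_apply_comp_eq_sum (F := fun p : Bool × Bool => F p.1 p.2) (hT.prodMk hZ)
    fun p => hF p.1 p.2, Fintype.sum_prod_type]
  simp only [hcell]

lemma cellE_const_mul (C : Ω → ℝ) (c : ℝ) (t z : Bool) :
    cellE μ T Z (fun ω => c * C ω) t z = c * cellE μ T Z C t z :=
  integral_const_mul c C

lemma cellE_residual [IsFiniteMeasure μ] {t z : Bool} (hP : cellP μ T Z t z ≠ 0)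
    {C D : Ω → ℝ} (hC : Integrable C μ) (hD : Integrable D μ) (a b r : ℝ) :
    cellE μ T Z (fun ω => C ω - a - r * (D ω - b)) t z
      = cellE μ T Z C t z - a - r * (cellE μ T Z D t z - b) := by
  have hs : μ {ω | T ω = t ∧ Z ω = z} ≠ 0 := (ENNReal.toReal_ne_zero.1 hP).1
  have := cond_isProbabilityMeasure (μ := μ) hs
  have hC' := hC.cond hs
  have hD' := hD.cond hs
  simp only [cellE]
  rw [integral_sub (by exact hC'.sub (integrable_const a))
      (by exact (hD'.sub (integrable_const b)).const_mul r),
    integral_sub hC' (integrable_const a), integral_const_mul,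
    integral_sub hD' (integrable_const b)]
  simp

lemma integral_div_cellP_eq_sum_cellE [IsFiniteMeasure μ] (hT : Measurable T)
    (hZ : Measurable Z) (hP : ∀ t z, cellP μ T Z t z ≠ 0) {G : Bool → Bool → Ω → ℝ}
    (hG : ∀ t z, Integrable (G t z) μ) :
    ∫ ω, G (T ω) (Z ω) ω / cellP μ T Z (T ω) (Z ω) ∂μ
      = ∑ t, ∑ z, cellE μ T Z (G t z) t z := by
  rw [integral_apply_comp_cell_eq_sum hT hZ (F := fun t z ω => G t z ω / cellP μ T Z t z)
    fun t z => (hG t z).div_const _]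
  refine Finset.sum_congr rfl fun t _ => Finset.sum_congr rfl fun z _ => ?_
  rw [integral_div, setIntegral_eq_measureReal_smul_integral_cond, smul_eq_mul]
  exact mul_div_cancel_left₀ _ (hP t z)

lemma sum_sg_mul_eq_dd (m : Bool → Bool → ℝ) :
    ∑ t, ∑ z, sg z * sg t * m t z = dd m := by
  simp only [Fintype.sum_bool, sg, dd, if_true, if_false, Bool.false_eq_true]
  ring

theorem integral_eif_eq [IsProbabilityMeasure μ] (hT : Measurable T) (hZ : Measurable Z)
    (hP : ∀ t z, cellP μ T Z t z ≠ 0) {Y D : Ω → ℝ} (hY : Integrable Y μ)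
    (hD : Integrable D μ) (mY mD : Bool → Bool → ℝ) (r d : ℝ) :
    ∫ ω, (r + sg (Z ω) * sg (T ω) / (cellP μ T Z (T ω) (Z ω) * d)
        * (Y ω - mY (T ω) (Z ω) - r * (D ω - mD (T ω) (Z ω)))) ∂μ
      = r + (dd (cellE μ T Z Y) - dd mY - r * (dd (cellE μ T Z D) - dd mD)) / d := by
  let G : Bool → Bool → Ω → ℝ := fun t z ω =>
    sg z * sg t / d * (Y ω - mY t z - r * (D ω - mD t z))
  have hG : ∀ t z, Integrable (G t z) μ := fun t z =>
    (((hY.sub (integrable_const _)).sub ((hD.sub (integrable_const _)).const_mul r))).const_mul _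
  calc _ = ∫ ω, (r + G (T ω) (Z ω) ω / cellP μ T Z (T ω) (Z ω)) ∂μ :=
        integral_congr_ae (ae_of_all _ fun ω => by simp only [G]; ring)
    _ = r + ∑ t, ∑ z, sg z * sg t / d
          * (cellE μ T Z Y t z - mY t z - r * (cellE μ T Z D t z - mD t z)) := by
        rw [integral_add (integrable_const r)
          (integrable_apply_comp_cell hT hZ fun t z => (hG t z).div_const _),
          integral_div_cellP_eq_sum_cellE hT hZ hP hG]
        simp only [G, cellE_const_mul, cellE_residual (hP _ _) hY hD, integral_const,
          probReal_univ, one_smul]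
    _ = _ := by
        simp only [div_mul_eq_mul_div _ d, ← Finset.sum_div, sum_sg_mul_eq_dd]
        congr 2
        simp only [dd]
        ring

end Cells

/-- multiple robustness under the model ℳ₂ (conditionally on `X = x`, with `μ`
the conditional law given `X = x`). Suppose the propensity `π*(t,z,x) = Pr(T=t,Z=z|X=x)` is
correct (here encoded by using the true cell probabilities `cellP`), while the working models
`μ̃_A, μ̃_Y` (with double differences `δ̃_A = dd μ̃_A ≠ 0`, `δ̃_Y = dd μ̃_Y`) are arbitrary.
If additionally the CATE ratio is correct, `δ̃_Y/δ̃_A = δ_Y/δ_A`, then `E[Δ̃(O) | X] = δ_Y(X)/δ_A(X)`,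
where `Δ̃(O) = δ̃_Y/δ̃_A + (2Z−1)(2T−1)/(π*(T,Z,X)·δ̃_A)·{Y − μ̃_Y(T,Z) − (δ̃_Y/δ̃_A)(A − μ̃_A(T,Z))}`. -/
theorem stmt5 {Ω : Type*} [MeasurableSpace Ω] (μ : Measure Ω) [IsProbabilityMeasure μ]
    (T Z A : Ω → Bool) (Y : Ω → ℝ)
    (μA' μY' : Bool → Bool → ℝ)   -- working models μ̃_A(t,z,x), μ̃_Y(t,z,x) at X = x
    (hmT : Measurable T) (hmZ : Measurable Z) (hmA : Measurable A)
    (hiY : Integrable Y μ)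
    (hpos : ∀ t z, 0 < cellP μ T Z t z)
    (hδA : dd (cellE μ T Z (fun ω => bi (A ω))) ≠ 0)
    (hδA' : dd (fun t z => μA' t z) ≠ 0)
    -- correct CATE ratio: δ̃_Y(x)/δ̃_A(x) = δ_Y(x)/δ_A(x)
    (hratio : dd (fun t z => μY' t z) / dd (fun t z => μA' t z)
      = dd (cellE μ T Z Y) / dd (cellE μ T Z (fun ω => bi (A ω)))) :
    (∫ ω, (dd (fun t z => μY' t z) / dd (fun t z => μA' t z)
        + sg (Z ω) * sg (T ω) / (cellP μ T Z (T ω) (Z ω) * dd (fun t z => μA' t z))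
          * (Y ω - μY' (T ω) (Z ω)
              - dd (fun t z => μY' t z) / dd (fun t z => μA' t z)
                * (bi (A ω) - μA' (T ω) (Z ω)))) ∂μ)
      = dd (cellE μ T Z Y) / dd (cellE μ T Z (fun ω => bi (A ω))) := by
  have hD : Integrable (fun ω => bi (A ω)) μ :=
    (Integrable.of_finite (f := bi)).comp_measurable hmA
  rw [integral_eif_eq hmT hmZ (fun t z => (hpos t z).ne') hiY hD]
  set r := dd (fun t z => μY' t z) / dd (fun t z => μA' t z)
  have hY : dd (cellE μ T Z Y) = r * dd (cellE μ T Z fun ω => bi (A ω)) := by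
    rw [hratio, div_mul_cancel₀ _ hδA]
  have hY' : dd (fun t z => μY' t z) = r * dd (fun t z => μA' t z) :=
    (div_mul_cancel₀ _ hδA').symm
  rw [← hratio]
  linear_combination (hY - hY') / dd (fun t z => μA' t z)
end

section
/- Under the panel-data instrumented DiD assumptions, δ_{Y,1}(X) − δ_{Y,0}(X) = (δ_{A,1}(X) − δ_{A,0}(X)) · τ(X), where δ_{Y,z}(x) = E[Y₁ − Y₀ | X=x, Z=z], δ_{A,z}(x) = E[A₁ − A₀ | X=x, Z=z], and τ(x) = E[Y_t(1) − Y_t(0) | X=x] is the time-invariant CATE. Hence τ(x) is identified by the ratio (δ_{Y,1}(x) − δ_{Y,0}(x)) / (δ_{A,1}(x) − δ_{A,0}(x)) when the denominator is nonzero. -/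
/-!
On the event `{Z = z}` consistency gives, pointwise,
`Y₁ − Y₀ = (Y₁(0) − Y₀(0)) + A₁(z)·Δ₁ − A₀(z)·Δ₀` with `Δ_t = Y_t(1) − Y_t(0)`, and
`A₁ − A₀ = A₁(z) − A₀(z)`. The right-hand sides are functions of the potential outcomes only,
so by independence and exclusion their conditional means given `Z = z` are unconditional means.
Taking the difference over `z`, the baseline trend `Y₁(0) − Y₀(0)` cancels, and for each `t`
the absence of a common effect modifier factorises `E[A_t(1)·Δ_t] − E[A_t(0)·Δ_t]` as
`(E[A_t(1)] − E[A_t(0)])·τ`, the stable treatment effect.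
-/

open MeasureTheory ProbabilityTheory

lemma measurable_bi : Measurable bi := measurable_from_top

lemma norm_bi_le_one (b : Bool) : ‖bi b‖ ≤ 1 := by
  cases b <;> simp [bi]

lemma apply_eq_add_bi_mul_sub (y : Bool → ℝ) (b : Bool) :
    y b = y false + bi b * (y true - y false) := by
  cases b <;> simp [bi]

section

variable {Ω : Type*} [MeasurableSpace Ω] {μ : Measure Ω}

lemma integrable_bi_comp [IsFiniteMeasure μ] {f : Ω → Bool} (hf : Measurable f) :
    Integrable (fun ω => bi (f ω)) μ :=
  .of_bound (measurable_bi.comp hf).aestronglyMeasurable 1 (ae_of_all _ fun _ => norm_bi_le_one _)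

lemma MeasureTheory.Integrable.bi_comp_mul {f : Ω → Bool} {g : Ω → ℝ} (hf : Measurable f)
    (hg : Integrable g μ) : Integrable (fun ω => bi (f ω) * g ω) μ :=
  hg.bdd_mul (measurable_bi.comp hf).aestronglyMeasurable (ae_of_all _ fun _ => norm_bi_le_one _)

lemma integral_bi_mul_sub_of_uncorrelated [IsFiniteMeasure μ] {a₁ a₀ : Ω → Bool} {g : Ω → ℝ}
    (ha₁ : Measurable a₁) (ha₀ : Measurable a₀) (hg : Integrable g μ)
    (hcov : ∫ ω, (bi (a₁ ω) - bi (a₀ ω)) * g ω ∂μ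
      = (∫ ω, (bi (a₁ ω) - bi (a₀ ω)) ∂μ) * ∫ ω, g ω ∂μ) :
    ∫ ω, bi (a₁ ω) * g ω ∂μ - ∫ ω, bi (a₀ ω) * g ω ∂μ
      = (∫ ω, bi (a₁ ω) ∂μ - ∫ ω, bi (a₀ ω) ∂μ) * ∫ ω, g ω ∂μ := by
  simp only [sub_mul] at hcov
  rwa [integral_sub (hg.bi_comp_mul ha₁) (hg.bi_comp_mul ha₀),
    integral_sub (integrable_bi_comp ha₁) (integrable_bi_comp ha₀)] at hcov

/-- The paper's `δ_{C,z} = E[C₁ − C₀ | Z = z]`. -/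
noncomputable def condTrend (μ : Measure Ω) (Z : Ω → Bool) (C : Bool → Ω → ℝ) (z : Bool) : ℝ :=
  ∫ ω, (C true ω - C false ω) ∂μ[|{ω | Z ω = z}]

/-- `Z ⫫ {A_t(z), Y_t(1) − Y_t(0), Y₁(0) − Y₀(0)}`, encoded through integrable test functions
of these potential outcomes. -/
def IndepExclusion (μ : Measure Ω) (Z : Ω → Bool) (Apot : Bool → Bool → Ω → Bool)
    (Ypot : Bool → Bool → Ω → ℝ) : Prop :=
  ∀ (g : (Bool → Bool → Bool) → (Bool → ℝ) → ℝ → ℝ) (z : Bool),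
    Integrable (fun ω => g (fun t' z' => Apot t' z' ω)
        (fun t' => Ypot t' true ω - Ypot t' false ω)
        (Ypot true false ω - Ypot false false ω)) μ →
    ∫ ω, g (fun t' z' => Apot t' z' ω) (fun t' => Ypot t' true ω - Ypot t' false ω)
        (Ypot true false ω - Ypot false false ω) ∂(μ[|{ω | Z ω = z}])
      = ∫ ω, g (fun t' z' => Apot t' z' ω) (fun t' => Ypot t' true ω - Ypot t' false ω)
        (Ypot true false ω - Ypot false false ω) ∂μ

variable {Z : Ω → Bool} {A : Bool → Ω → Bool} {Y : Bool → Ω → ℝ}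
  {Apot : Bool → Bool → Ω → Bool} {Ypot : Bool → Bool → Ω → ℝ}

lemma condTrend_treatment_eq [IsFiniteMeasure μ] (hmZ : Measurable Z)
    (hmApot : ∀ t z, Measurable (Apot t z)) (hconsA : ∀ t ω, A t ω = Apot t (Z ω) ω)
    (hie : IndepExclusion μ Z Apot Ypot) (z : Bool) :
    condTrend μ Z (fun t ω => bi (A t ω)) z
      = ∫ ω, bi (Apot true z ω) ∂μ - ∫ ω, bi (Apot false z ω) ∂μ := by
  have hint₁ := integrable_bi_comp (μ := μ) (hmApot true z)
  have hint₀ := integrable_bi_comp (μ := μ) (hmApot false z)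
  calc condTrend μ Z (fun t ω => bi (A t ω)) z
      = ∫ ω, (bi (Apot true z ω) - bi (Apot false z ω)) ∂μ[|{ω | Z ω = z}] :=
        integral_congr_ae <| ae_cond_of_forall_mem (hmZ (measurableSet_singleton z))
          fun ω (hω : Z ω = z) => by simp only [hconsA, hω]
    _ = ∫ ω, (bi (Apot true z ω) - bi (Apot false z ω)) ∂μ :=
        hie (fun a _ _ => bi (a true z) - bi (a false z)) z (hint₁.sub hint₀)
    _ = _ := integral_sub hint₁ hint₀

lemma condTrend_outcome_eq (hmZ : Measurable Z) (hmApot : ∀ t z, Measurable (Apot t z))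
    (hiYpot : ∀ t a, Integrable (Ypot t a) μ) (hconsA : ∀ t ω, A t ω = Apot t (Z ω) ω)
    (hconsY : ∀ t ω, Y t ω = Ypot t (A t ω) ω) (hie : IndepExclusion μ Z Apot Ypot) (z : Bool) :
    condTrend μ Z Y z
      = ∫ ω, (Ypot true false ω - Ypot false false ω) ∂μ
        + ∫ ω, bi (Apot true z ω) * (Ypot true true ω - Ypot true false ω) ∂μ
        - ∫ ω, bi (Apot false z ω) * (Ypot false true ω - Ypot false false ω) ∂μ := by
  have hbase : Integrable (fun ω => Ypot true false ω - Ypot false false ω) μ :=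
    (hiYpot true false).sub (hiYpot false false)
  have hint : ∀ t, Integrable (fun ω => bi (Apot t z ω) * (Ypot t true ω - Ypot t false ω)) μ :=
    fun t => ((hiYpot t true).sub (hiYpot t false)).bi_comp_mul (hmApot t z)
  have hY : ∀ t ω, Z ω = z →
      Y t ω = Ypot t false ω + bi (Apot t z ω) * (Ypot t true ω - Ypot t false ω) :=
    fun t ω hω => by
      rw [hconsY, hconsA, hω]
      exact apply_eq_add_bi_mul_sub (fun a => Ypot t a ω) _
  calc condTrend μ Z Y z
      = ∫ ω, ((Ypot true false ω - Ypot false false ω)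
          + bi (Apot true z ω) * (Ypot true true ω - Ypot true false ω)
          - bi (Apot false z ω) * (Ypot false true ω - Ypot false false ω))
          ∂μ[|{ω | Z ω = z}] :=
        integral_congr_ae <| ae_cond_of_forall_mem (hmZ (measurableSet_singleton z))
          fun ω (hω : Z ω = z) => by dsimp only; rw [hY true ω hω, hY false ω hω]; ring
    _ = ∫ ω, ((Ypot true false ω - Ypot false false ω)
          + bi (Apot true z ω) * (Ypot true true ω - Ypot true false ω)
          - bi (Apot false z ω) * (Ypot false true ω - Ypot false false ω)) ∂μ :=
        hie (fun a d r => r + bi (a true z) * d true - bi (a false z) * d false) z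
          ((hbase.add (hint true)).sub (hint false))
    _ = _ := by
        rw [integral_sub _ (hint false), integral_add hbase (hint true)]
        exact hbase.add (hint true)

end

theorem stmt10_general {Ω : Type*} [MeasurableSpace Ω] (μ : Measure Ω) [IsProbabilityMeasure μ]
    (Z : Ω → Bool) (A : Bool → Ω → Bool) (Y : Bool → Ω → ℝ)
    (Apot : Bool → Bool → Ω → Bool)   -- Apot t z ω = A_t(z)(ω)
    (Ypot : Bool → Bool → Ω → ℝ)      -- Ypot t a ω = Y_t(a)(ω)
    (τ : ℝ)
    (hmZ : Measurable Z)
    (hmApot : ∀ t z, Measurable (Apot t z))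
    (hiYpot : ∀ t a, Integrable (Ypot t a) μ)
    -- consistency: A_t = A_t(Z) and Y_t = Y_t(A_t)
    (hconsA : ∀ t ω, A t ω = Apot t (Z ω) ω)
    (hconsY : ∀ t ω, Y t ω = Ypot t (A t ω) ω)
    -- stable treatment effect over time: E[Y_t(1) − Y_t(0) | X=x] = τ(x) for t = 0, 1
    (hstab : ∀ t, ∫ ω, (Ypot t true ω - Ypot t false ω) ∂μ = τ)
    -- independence & exclusion: Z ⫫ {A_t(1), A_t(0), Y_t(1)−Y_t(0), Y₁(0)−Y₀(0)} | X
    (hie : ∀ (g : (Bool → Bool → Bool) → (Bool → ℝ) → ℝ → ℝ) (z : Bool),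
      Integrable (fun ω => g (fun t' z' => Apot t' z' ω)
          (fun t' => Ypot t' true ω - Ypot t' false ω)
          (Ypot true false ω - Ypot false false ω)) μ →
      ∫ ω, g (fun t' z' => Apot t' z' ω) (fun t' => Ypot t' true ω - Ypot t' false ω)
          (Ypot true false ω - Ypot false false ω) ∂(μ[|{ω | Z ω = z}])
        = ∫ ω, g (fun t' z' => Apot t' z' ω) (fun t' => Ypot t' true ω - Ypot t' false ω)
          (Ypot true false ω - Ypot false false ω) ∂μ)
    -- no unmeasured common effect modifier: Cov(A_t(1)−A_t(0), Y_t(1)−Y_t(0) | X) = 0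
    (hnocm : ∀ t, ∫ ω, (bi (Apot t true ω) - bi (Apot t false ω)) *
                        (Ypot t true ω - Ypot t false ω) ∂μ
        = (∫ ω, (bi (Apot t true ω) - bi (Apot t false ω)) ∂μ) *
          (∫ ω, (Ypot t true ω - Ypot t false ω) ∂μ)) :
    ((∫ ω, (Y true ω - Y false ω) ∂(μ[|{ω | Z ω = true}]))
        - (∫ ω, (Y true ω - Y false ω) ∂(μ[|{ω | Z ω = false}]))
      = ((∫ ω, (bi (A true ω) - bi (A false ω)) ∂(μ[|{ω | Z ω = true}]))
          - (∫ ω, (bi (A true ω) - bi (A false ω)) ∂(μ[|{ω | Z ω = false}]))) * τ) ∧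
    (((∫ ω, (bi (A true ω) - bi (A false ω)) ∂(μ[|{ω | Z ω = true}]))
        - (∫ ω, (bi (A true ω) - bi (A false ω)) ∂(μ[|{ω | Z ω = false}]))) ≠ 0 →
      τ = ((∫ ω, (Y true ω - Y false ω) ∂(μ[|{ω | Z ω = true}]))
            - (∫ ω, (Y true ω - Y false ω) ∂(μ[|{ω | Z ω = false}])))
          / ((∫ ω, (bi (A true ω) - bi (A false ω)) ∂(μ[|{ω | Z ω = true}]))
            - (∫ ω, (bi (A true ω) - bi (A false ω)) ∂(μ[|{ω | Z ω = false}])))) := by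
  have hcov : ∀ t, ∫ ω, bi (Apot t true ω) * (Ypot t true ω - Ypot t false ω) ∂μ
        - ∫ ω, bi (Apot t false ω) * (Ypot t true ω - Ypot t false ω) ∂μ
      = (∫ ω, bi (Apot t true ω) ∂μ - ∫ ω, bi (Apot t false ω) ∂μ) * τ := fun t => by
    rw [← hstab t]
    exact integral_bi_mul_sub_of_uncorrelated (hmApot t true) (hmApot t false)
      ((hiYpot t true).sub (hiYpot t false)) (hnocm t)
  have hmain : condTrend μ Z Y true - condTrend μ Z Y false
      = (condTrend μ Z (fun t ω => bi (A t ω)) true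
          - condTrend μ Z (fun t ω => bi (A t ω)) false) * τ := by
    rw [condTrend_outcome_eq hmZ hmApot hiYpot hconsA hconsY hie true,
      condTrend_outcome_eq hmZ hmApot hiYpot hconsA hconsY hie false,
      condTrend_treatment_eq hmZ hmApot hconsA hie true,
      condTrend_treatment_eq hmZ hmApot hconsA hie false]
    linear_combination hcov true - hcov false
  exact ⟨hmain, fun hrel => eq_div_of_mul_eq hrel ((mul_comm _ _).trans hmain.symm)⟩

/-- panel-data instrumented DiD identification of the CATE, conditionally on
`X = x` (the measure `μ` is the conditional law of the panel data given `X = x`, so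
`δ_{C,z}(x) = E[C₁ − C₀ | X=x, Z=z]` is an expectation under `μ[|{Z=z}]`).
`Apot t z = A_t(z)`, `Ypot t a = Y_t(a)`, observed `A t`, `Y t`, and `τ = τ(x)` the
time-invariant CATE. Under consistency, positivity, trend relevance, stable treatment effect
over time, independence & exclusion restriction, and no unmeasured common effect modifier:
`δ_{Y,1}(x) − δ_{Y,0}(x) = (δ_{A,1}(x) − δ_{A,0}(x))·τ(x)`, and hence `τ(x)` is identified by
the ratio `(δ_{Y,1}(x) − δ_{Y,0}(x)) / (δ_{A,1}(x) − δ_{A,0}(x))`. -/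
theorem stmt10 {Ω : Type*} [MeasurableSpace Ω] (μ : Measure Ω) [IsProbabilityMeasure μ]
    (Z : Ω → Bool) (A : Bool → Ω → Bool) (Y : Bool → Ω → ℝ)
    (Apot : Bool → Bool → Ω → Bool)   -- Apot t z ω = A_t(z)(ω)
    (Ypot : Bool → Bool → Ω → ℝ)      -- Ypot t a ω = Y_t(a)(ω)
    (τ : ℝ)
    (hmZ : Measurable Z) (hmA : ∀ t, Measurable (A t))
    (hmApot : ∀ t z, Measurable (Apot t z))
    (hiY : ∀ t, Integrable (Y t) μ) (hiYpot : ∀ t a, Integrable (Ypot t a) μ)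
    -- consistency: A_t = A_t(Z) and Y_t = Y_t(A_t)
    (hconsA : ∀ t ω, A t ω = Apot t (Z ω) ω)
    (hconsY : ∀ t ω, Y t ω = Ypot t (A t ω) ω)
    -- positivity: c₃ < π_Z(x) < 1 − c₃
    (c₃ : ℝ) (hc₃ : 0 < c₃) (hc₃' : c₃ < 1/2)
    (hpos : c₃ < (μ {ω | Z ω = true}).toReal ∧ (μ {ω | Z ω = true}).toReal < 1 - c₃)
    -- trend relevance: E[A₁(1) − A₀(1) | Z=1, X] ≠ E[A₁(0) − A₀(0) | Z=0, X]
    (htrend : ∫ ω, (bi (Apot true true ω) - bi (Apot false true ω)) ∂(μ[|{ω | Z ω = true}])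
      ≠ ∫ ω, (bi (Apot true false ω) - bi (Apot false false ω)) ∂(μ[|{ω | Z ω = false}]))
    -- stable treatment effect over time: E[Y_t(1) − Y_t(0) | X=x] = τ(x) for t = 0, 1
    (hstab : ∀ t, ∫ ω, (Ypot t true ω - Ypot t false ω) ∂μ = τ)
    -- independence & exclusion: Z ⫫ {A_t(1), A_t(0), Y_t(1)−Y_t(0), Y₁(0)−Y₀(0)} | X
    (hie : ∀ (g : (Bool → Bool → Bool) → (Bool → ℝ) → ℝ → ℝ) (z : Bool),
      Integrable (fun ω => g (fun t' z' => Apot t' z' ω)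
          (fun t' => Ypot t' true ω - Ypot t' false ω)
          (Ypot true false ω - Ypot false false ω)) μ →
      ∫ ω, g (fun t' z' => Apot t' z' ω) (fun t' => Ypot t' true ω - Ypot t' false ω)
          (Ypot true false ω - Ypot false false ω) ∂(μ[|{ω | Z ω = z}])
        = ∫ ω, g (fun t' z' => Apot t' z' ω) (fun t' => Ypot t' true ω - Ypot t' false ω)
          (Ypot true false ω - Ypot false false ω) ∂μ)
    -- no unmeasured common effect modifier: Cov(A_t(1)−A_t(0), Y_t(1)−Y_t(0) | X) = 0
    (hnocm : ∀ t, ∫ ω, (bi (Apot t true ω) - bi (Apot t false ω)) *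
                        (Ypot t true ω - Ypot t false ω) ∂μ
        = (∫ ω, (bi (Apot t true ω) - bi (Apot t false ω)) ∂μ) *
          (∫ ω, (Ypot t true ω - Ypot t false ω) ∂μ)) :
    ((∫ ω, (Y true ω - Y false ω) ∂(μ[|{ω | Z ω = true}]))
        - (∫ ω, (Y true ω - Y false ω) ∂(μ[|{ω | Z ω = false}]))
      = ((∫ ω, (bi (A true ω) - bi (A false ω)) ∂(μ[|{ω | Z ω = true}]))
          - (∫ ω, (bi (A true ω) - bi (A false ω)) ∂(μ[|{ω | Z ω = false}]))) * τ) ∧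
    (((∫ ω, (bi (A true ω) - bi (A false ω)) ∂(μ[|{ω | Z ω = true}]))
        - (∫ ω, (bi (A true ω) - bi (A false ω)) ∂(μ[|{ω | Z ω = false}]))) ≠ 0 →
      τ = ((∫ ω, (Y true ω - Y false ω) ∂(μ[|{ω | Z ω = true}]))
            - (∫ ω, (Y true ω - Y false ω) ∂(μ[|{ω | Z ω = false}])))
          / ((∫ ω, (bi (A true ω) - bi (A false ω)) ∂(μ[|{ω | Z ω = true}]))
            - (∫ ω, (bi (A true ω) - bi (A false ω)) ∂(μ[|{ω | Z ω = false}])))) :=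
  stmt10_general μ Z A Y Apot Ypot τ hmZ hmApot hiYpot hconsA hconsY hstab hie hnocm
end
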